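/- Fix λ ∈ (0,1) and define f₀(z) := min{e^{z+λ−1}, 1} and f₁ as: f₁(z) = (e^{λ−1}−λ)/(1−z) for z ∈ [0, λe^{1−λ}), f₁(z) = −λ/W(−λe^{1−λ−z}) for z ∈ [λe^{1−λ}, 1), f₁(1) = 1. Then f₀(z) ≥ f₁(z) for all z ∈ [0,1]. -/

import Mathlib

/-!
`exp (z - 1)` separates the two functions: it lies below `f₀` on `[0, 1]` and above each branch of `f₁`.
On the first branch, with `t = l e^{1-l}`, the numerator is `e^{l-1} (1 - t)`; since `l ≤ t` and
`x ↦ (1 - x) eˣ` decreases on `[0, ∞)`, it is at most `(1 - z) e^{z-1}`.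
On the second branch `y = W(-l e^{1-l-z})` satisfies `y ≤ -l`, by monotonicity of `x ↦ x eˣ` on
`[-1, ∞)`, and `y eʸ = -l e^{1-l-z}` rewrites `-l / y` as `e^{y+l+z-1} ≤ e^{z-1}`.
-/

open Real Set

lemma monotoneOn_mul_exp : MonotoneOn (fun x : ℝ => x * exp x) (Ici (-1)) := by
  have hd : ∀ x : ℝ, HasDerivAt (fun x : ℝ => x * exp x) ((x + 1) * exp x) x := fun x =>
    ((hasDerivAt_id' x).fun_mul (hasDerivAt_exp x)).congr_deriv (by ring)
  refine monotoneOn_of_deriv_nonneg (convex_Ici _) (by fun_prop) (by fun_prop) fun x hx => ?_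
  rw [interior_Ici, mem_Ioi] at hx
  rw [(hd x).deriv]
  have : 0 ≤ x + 1 := by linarith
  positivity

lemma antitoneOn_one_sub_mul_exp : AntitoneOn (fun x : ℝ => (1 - x) * exp x) (Ici 0) := by
  have hd : ∀ x : ℝ, HasDerivAt (fun x : ℝ => (1 - x) * exp x) (-(x * exp x)) x := fun x =>
    (((hasDerivAt_id' x).const_sub 1).fun_mul (hasDerivAt_exp x)).congr_deriv (by ring)
  refine antitoneOn_of_deriv_nonpos (convex_Ici _) (by fun_prop) (by fun_prop) fun x hx => ?_
  rw [interior_Ici, mem_Ioi] at hx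
  rw [(hd x).deriv, neg_nonpos]
  positivity

lemma mul_exp_one_sub_lt_one {l : ℝ} (hl : l < 1) : l * exp (1 - l) < 1 := by
  have h := add_one_lt_exp (sub_ne_zero.mpr hl.ne)
  calc l * exp (1 - l) < exp (l - 1) * exp (1 - l) := by gcongr; linarith
    _ = 1 := by rw [← exp_add, sub_add_sub_cancel, sub_self, exp_zero]

lemma le_mul_exp_one_sub {l : ℝ} (hl0 : 0 ≤ l) (hl1 : l ≤ 1) : l ≤ l * exp (1 - l) :=
  le_mul_of_one_le_right hl0 (one_le_exp (by linarith))

lemma le_neg_of_mul_exp_eq {y l s : ℝ} (hl0 : 0 < l) (hl1 : l ≤ 1) (hy : -1 ≤ y) (hs : -l < s)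
    (h : y * exp y = -(l * exp s)) : y ≤ -l := by
  by_contra! hly
  have hmono : -l * exp (-l) ≤ y * exp y :=
    monotoneOn_mul_exp (by simpa using hl1) hy hly.le
  have : l * exp (-l) < l * exp s := by gcongr
  linarith

lemma div_le_exp_of_lt_mul_exp {l z : ℝ} (hl0 : 0 < l) (hl1 : l < 1) (hz0 : 0 ≤ z)
    (hz : z < l * exp (1 - l)) : (exp (l - 1) - l) / (1 - z) ≤ exp (z - 1) := by
  set t := l * exp (1 - l)
  have ht1 : t < 1 := mul_exp_one_sub_lt_one hl1
  have hlt : l ≤ t := le_mul_exp_one_sub hl0.le hl1.le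
  have hnum : exp (l - 1) - l = (1 - t) * exp (l - 1) := by
    rw [sub_mul, one_mul, mul_assoc, ← exp_add, sub_add_sub_cancel, sub_self, exp_zero, mul_one]
  have hdecr : (1 - t) * exp t ≤ (1 - z) * exp z :=
    antitoneOn_one_sub_mul_exp hz0 (hz0.trans hz.le) hz.le
  rw [div_le_iff₀ (by linarith), hnum]
  calc (1 - t) * exp (l - 1) ≤ (1 - t) * exp (t - 1) := by gcongr
    _ = (1 - t) * exp t * exp (-1) := by rw [mul_assoc, ← exp_add]; ring_nf
    _ ≤ (1 - z) * exp z * exp (-1) := by gcongr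
    _ = exp (z - 1) * (1 - z) := by rw [sub_eq_add_neg z, exp_add]; ring

lemma neg_inv_exp_one_le {l z : ℝ} (hz : l * exp (1 - l) ≤ z) :
    -(exp 1)⁻¹ ≤ -(l * exp (1 - l - z)) := by
  have hle : l * exp (1 - l) ≤ exp (z - 1) := by
    linarith [add_one_le_exp (z - 1)]
  calc -(exp 1)⁻¹ = -(exp (z - 1) * exp (-z)) := by rw [← exp_add, ← exp_neg]; ring_nf
    _ ≤ -(l * exp (1 - l) * exp (-z)) := by gcongr
    _ = -(l * exp (1 - l - z)) := by rw [mul_assoc, ← exp_add, ← sub_eq_add_neg]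

lemma neg_div_le_exp_of_mul_exp_eq {l z y : ℝ} (hl0 : 0 < l) (hl1 : l ≤ 1) (hz : z < 1)
    (hy : -1 ≤ y) (h : y * exp y = -(l * exp (1 - l - z))) : -l / y ≤ exp (z - 1) := by
  have hyl : y ≤ -l := le_neg_of_mul_exp_eq hl0 hl1 hy (by linarith) h
  have hdiv : -l / y = exp (y + l + z - 1) := by
    have hsplit : exp (y + l + z - 1) * exp (1 - l - z) = exp y := by
      rw [← exp_add]; ring_nf
    rw [div_eq_iff (by linarith), ← mul_right_cancel_iff_of_pos (exp_pos (1 - l - z))]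
    linear_combination (-1 : ℝ) * h - y * hsplit
  rw [hdiv]
  gcongr
  linarith

theorem stmt_8_general (W : ℝ → ℝ)
    (hW : ∀ z : ℝ, -(Real.exp 1)⁻¹ ≤ z → -1 ≤ W z ∧ W z * Real.exp (W z) = z)
    (l : ℝ) (hl : l ∈ Set.Ioo (0 : ℝ) 1)
    (f₀ f₁ : ℝ → ℝ)
    (hf₀ : ∀ z, f₀ z = min (Real.exp (z + l - 1)) 1)
    (hf₁ : ∀ z, f₁ z =
      if z < l * Real.exp (1 - l) then (Real.exp (l - 1) - l) / (1 - z)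
      else if z < 1 then -l / W (-(l * Real.exp (1 - l - z)))
      else 1) :
    ∀ z ∈ Set.Icc (0 : ℝ) 1, f₀ z ≥ f₁ z := by
  obtain ⟨hl0, hl1⟩ := hl
  rintro z ⟨hz0, hz1⟩
  calc f₁ z ≤ exp (z - 1) := by
        rw [hf₁]
        split_ifs with h₁ h₂
        · exact div_le_exp_of_lt_mul_exp hl0 hl1 hz0 h₁
        · obtain ⟨hW₁, hW₂⟩ := hW _ (neg_inv_exp_one_le (not_lt.mp h₁))
          exact neg_div_le_exp_of_mul_exp_eq hl0 hl1.le h₂ hW₁ hW₂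
        · rw [le_antisymm hz1 (not_lt.mp h₂), sub_self, exp_zero]
    _ ≤ f₀ z := by
        rw [hf₀]
        exact le_min (exp_le_exp.mpr (by linarith)) (exp_le_one_iff.mpr (by linarith))

theorem stmt_8 (W : ℝ → ℝ)
    (hW : ∀ z : ℝ, -(Real.exp 1)⁻¹ ≤ z → -1 ≤ W z ∧ W z * Real.exp (W z) = z)
    (hW' : ∀ y : ℝ, -1 ≤ y → W (y * Real.exp y) = y)
    (l : ℝ) (hl : l ∈ Set.Ioo (0 : ℝ) 1)
    (f₀ f₁ : ℝ → ℝ)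
    (hf₀ : ∀ z, f₀ z = min (Real.exp (z + l - 1)) 1)
    (hf₁ : ∀ z, f₁ z =
      if z < l * Real.exp (1 - l) then (Real.exp (l - 1) - l) / (1 - z)
      else if z < 1 then -l / W (-(l * Real.exp (1 - l - z)))
      else 1) :
    ∀ z ∈ Set.Icc (0 : ℝ) 1, f₀ z ≥ f₁ z :=
  stmt_8_general W hW l hl f₀ f₁ hf₀ hf₁
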